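/- Let N_i = (G_i, c_i) and N_j = (G_j, c_j) be flow networks on disjoint vertex and edge sets, let e1 be an input edge of G_i and e2 an output edge of G_j with c_i(e1) = c_j(e2), and let N_k be the network obtained by splicing e1 and e2 into a single new internal edge e (vertex set V_i ∪ V_j; input edges (Ein_i \ {e1}) ∪ Ein_j; output edges Eout_i ∪ (Eout_j \ {e2}); internal edges E#_i ∪ E#_j ∪ {e}, where tail(e) = tail_{G_j}(e2), head(e) = head_{G_i}(e1), c(e) = c_i(e1), and all other heads, tails, and capacities are inherited). Then for all A1 ⊆ Ein_i \ {e1}, A2 ⊆ Ein_j, B1 ⊆ Eout_i, B2 ⊆ Eout_j \ {e2}, setting A = A1 ∪ A2 and B = B1 ∪ B2: maxFromTo_{N_k}(A, B) = maxFromTo_{N_i}(A1, B1) + maxFromTo_{N_j}(A2, B2) + min{ maxFromTo_{N_i}(A1 ∪ {e1}, B1) − maxFromTo_{N_i}(A1, B1), maxFromTo_{N_j}(A2, B2 ∪ {e2}) − maxFromTo_{N_j}(A2, B2) }. -/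

import Mathlib

/-!
Restricting a flow of `Nk` to the two halves gives a flow of `Ni` from `A1 ∪ {e1}` and a flow
of `Nj` into `B2 ∪ {e2}` that agree on the spliced edge, and two such flows glue back. Everything
then rests on two facts about one network with an extra input edge `e1` (an extra output edge is
the same after reversing all edges):
(1) a flow from `A ∪ {e1}` carries at most `maxFromTo A B` through `A`;
(2) for `0 ≤ s ≤ maxFromTo (A ∪ {e1}) B - maxFromTo A B`, some flow from `A ∪ {e1}` carries
exactly `maxFromTo A B` through `A` and `s` through `e1`.
Closing the network up with one extra vertex turns flows into circulations, which decompose into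
cycles. For (1), drop the cycles through `e1`: they pass the extra vertex only once, so they
miss `A`. For (2), among flows of maximal total value take one of maximal value on `A`; were that
below `maxFromTo A B`, a cycle of its difference with an optimal flow from `A` would raise it
without lowering the total. Mixing with an optimal flow from `A` then gives every `s`.
By (1) on both sides, a flow of `Nk` has value at most `maxFromTo A1 B1 + maxFromTo A2 (B2 ∪ {e2})`
and at most `maxFromTo (A1 ∪ {e1}) B1 + maxFromTo A2 B2`; gluing the flows of (2) for
`s = min (…) (…)` attains this.
-/

open Finset

/-- A flow network: a finite vertex set `V`, a finite edge set `E` partitioned into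
input edges `Ein`, output edges `Eout` and internal edges `Eint`; each internal edge
has two distinct endpoints `tail e` and `head e` (with at most one internal edge per
`(tail, head)` pair), each input edge has a head only, each output edge a tail only
(values of `tail`/`head` outside their intended domains are irrelevant junk); and a
nonnegative upper-bound capacity `cap`. -/
structure FlowNetwork (V E : Type) [Fintype V] [Fintype E]
    [DecidableEq V] [DecidableEq E] where
  Ein : Finset E
  Eout : Finset E
  Eint : Finset E
  disj_in_out : Disjoint Ein Eout
  disj_in_int : Disjoint Ein Eint
  disj_out_int : Disjoint Eout Eint
  tail : E → V
  head : E → V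
  no_self_loop : ∀ e ∈ Eint, tail e ≠ head e
  no_multi : ∀ e ∈ Eint, ∀ e' ∈ Eint, tail e = tail e' → head e = head e' → e = e'
  cap : E → ℝ
  cap_nonneg : ∀ e, 0 ≤ cap e

namespace FlowNetwork

variable {V E : Type} [Fintype V] [Fintype E] [DecidableEq V] [DecidableEq E]

/-- A flow `f : E → ℝ≥0` is feasible if it conserves flow at every vertex and
respects the capacity of every edge. -/
def Feasible (N : FlowNetwork V E) (f : E → ℝ) : Prop :=
  (∀ e, 0 ≤ f e) ∧ (∀ e, f e ≤ N.cap e) ∧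
  ∀ v : V,
    ∑ e ∈ (N.Ein ∪ N.Eint).filter (fun e => N.head e = v), f e =
    ∑ e ∈ (N.Eout ∪ N.Eint).filter (fun e => N.tail e = v), f e

/-- `maxFromTo N A B`: the supremum of `f(A)` over all feasible flows `f` that
vanish on `(Ein \ A) ∪ (Eout \ B)`. -/
noncomputable def maxFromTo (N : FlowNetwork V E) (A B : Finset E) : ℝ :=
  sSup {x : ℝ | ∃ f : E → ℝ, N.Feasible f ∧
    (∀ e ∈ (N.Ein \ A) ∪ (N.Eout \ B), f e = 0) ∧ x = ∑ e ∈ A, f e}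

end FlowNetwork

theorem Finset.sum_image_inl_union_image_inr {α β : Type*} [DecidableEq α] [DecidableEq β]
    (s : Finset α) (t : Finset β) (F : α ⊕ β → ℝ) :
    ∑ x ∈ s.image .inl ∪ t.image .inr, F x = ∑ a ∈ s, F (.inl a) + ∑ b ∈ t, F (.inr b) := by
  rw [← sum_disjSum]
  congr 1
  ext (x | x) <;> simp

theorem sub_mem_uIcc_zero {a b x : ℝ} (ha : 0 ≤ a) (hax : a ≤ x⁺) (hb : 0 ≤ b) (hbx : b ≤ x⁻) :
    a - b ∈ Set.uIcc 0 x := by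
  rw [Set.mem_uIcc]
  rcases le_total 0 x with hx | hx
  · rw [negPart_eq_zero.2 hx] at hbx
    rw [posPart_eq_self.2 hx] at hax
    left; constructor <;> linarith
  · rw [posPart_eq_zero.2 hx] at hax
    rw [negPart_eq_neg.2 hx] at hbx
    right; constructor <;> linarith

section SignedIndicator

variable {E : Type*} [DecidableEq E]

def signedIndicator (C : Finset (E ⊕ E)) (e : E) : ℤ :=
  (if .inl e ∈ C then 1 else 0) - (if .inr e ∈ C then 1 else 0)

theorem abs_signedIndicator_le (C : Finset (E ⊕ E)) (e : E) :
    |signedIndicator C e| ≤ 1 := by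
  unfold signedIndicator
  split_ifs <;> norm_num

theorem signedIndicator_cast (C : Finset (E ⊕ E)) (e : E) :
    (signedIndicator C e : ℝ) =
      (C : Set (E ⊕ E)).indicator 1 (.inl e) - (C : Set (E ⊕ E)).indicator 1 (.inr e) := by
  simp only [signedIndicator, Set.indicator_apply, mem_coe, Pi.one_apply]
  push_cast
  rfl

end SignedIndicator

section Circulation

variable {W E : Type*} [Fintype E] [DecidableEq W] (tail head : E → W)

def circulations : Submodule ℝ (E → ℝ) where
  carrier := {f | ∀ w, ∑ e with head e = w, f e = ∑ e with tail e = w, f e}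
  add_mem' hf hg w := by simp only [Pi.add_apply, sum_add_distrib, hf w, hg w]
  zero_mem' _ := by simp
  smul_mem' c f hf w := by simp only [Pi.smul_apply, smul_eq_mul, ← mul_sum, hf w]

theorem sum_filter_indicator_one [DecidableEq E] (p : E → Prop) [DecidablePred p] (C : Finset E) :
    ∑ e with p e, (C : Set E).indicator (1 : E → ℝ) e = #{e ∈ C | p e} := by
  simp only [Set.indicator_apply, mem_coe, Pi.one_apply, sum_boole]
  congr 2; ext; simp [and_comm]

def IsCyclePacking (C : Finset E) : Prop :=
  (C : Set E).indicator 1 ∈ circulations tail head ∧ Set.InjOn tail C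

variable {tail head}

theorem exists_isCyclePacking_subset [DecidableEq E] {S : Finset E} (hS : S.Nonempty)
    (hsucc : ∀ e ∈ S, ∃ e' ∈ S, tail e' = head e) :
    ∃ C ⊆ S, C.Nonempty ∧ IsCyclePacking tail head C := by
  let P : Finset E → Prop := fun C => C.Nonempty ∧ ∀ e ∈ C, ∃ e' ∈ C, tail e' = head e
  obtain ⟨C, hC, hmin⟩ := (S.powerset.filter P).exists_min_image card
    ⟨S, mem_filter.2 ⟨mem_powerset_self S, hS, hsucc⟩⟩
  obtain ⟨hCS, hCne, hCsucc⟩ : C ⊆ S ∧ P C := by simpa using hC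
  have hmin' : ∀ D ⊆ C, P D → #C ≤ #D := fun D hD hPD =>
    hmin D (mem_filter.2 ⟨mem_powerset.2 (hD.trans hCS), hPD⟩)
  -- on a minimal `C` the successor map is injective (its image is again closed) and no two
  -- edges share a tail (one of them could be dropped)
  choose! next hnextC hnext using hCsucc
  have hmaps : ∀ x ∈ C.image next, x ∈ C := by
    simp only [mem_image]; rintro _ ⟨e, he, rfl⟩; exact hnextC e he
  have hinj : Set.InjOn next C := by
    by_contra hni
    have hlt : #(C.image next) < #C := card_image_le.lt_of_ne (mt card_image_iff.1 hni)
    refine hlt.not_ge (hmin' _ hmaps ⟨hCne.image _, ?_⟩)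
    simp only [mem_image]
    rintro _ ⟨e, he, rfl⟩
    exact ⟨next (next e), ⟨next e, hnextC e he, rfl⟩, hnext _ (hnextC e he)⟩
  have himage : C.image next = C :=
    eq_of_subset_of_card_le hmaps (card_image_of_injOn hinj).ge
  refine ⟨C, hCS, hCne, fun w => ?_, fun e he e' he' htail => ?_⟩
  · have hfib : {e ∈ C | tail e = w} = {e ∈ C | head e = w}.image next := by
      ext x
      simp only [mem_filter, mem_image]
      constructor
      · rintro ⟨hx, rfl⟩
        rw [← himage, mem_image] at hx
        obtain ⟨e, he, rfl⟩ := hx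
        exact ⟨e, ⟨he, (hnext e he).symm⟩, rfl⟩
      · rintro ⟨e, ⟨he, rfl⟩, rfl⟩
        exact ⟨hnextC e he, hnext e he⟩
    rw [sum_filter_indicator_one, sum_filter_indicator_one, hfib,
      card_image_of_injOn (hinj.mono (filter_subset _ _))]
  · by_contra hne
    have hP : P (C.erase e') := by
      refine ⟨⟨e, mem_erase.2 ⟨hne, he⟩⟩, fun x hx => ?_⟩
      have hxC := mem_of_mem_erase hx
      by_cases hx' : next x = e'
      · exact ⟨e, mem_erase.2 ⟨hne, he⟩, by rw [htail, ← hx', hnext x hxC]⟩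
      · exact ⟨next x, mem_erase.2 ⟨hx', hnextC x hxC⟩, hnext x hxC⟩
    exact (card_erase_lt_of_mem he').not_ge (hmin' _ (erase_subset _ _) hP)

theorem exists_isCyclePacking_decomposition [DecidableEq E] {f : E → ℝ} (hf0 : 0 ≤ f)
    (hf : f ∈ circulations tail head) :
    ∃ c : Finset E → ℝ, 0 ≤ c ∧ (∀ C, c C ≠ 0 → IsCyclePacking tail head C) ∧
      f = ∑ C, c C • (C : Set E).indicator 1 := by
  induction hn : #{e | f e ≠ 0} using Nat.strong_induction_on generalizing f with
  | _ n ih =>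
  by_cases hzero : f = 0
  · exact ⟨0, le_rfl, by simp, by simp [hzero]⟩
  set S : Finset E := {e | f e ≠ 0}
  have hpos : ∀ e ∈ S, 0 < f e := fun e he =>
    (hf0 e).lt_of_ne' (mem_filter.1 he).2
  -- positive flow into `head e` has to leave it again along some edge of the support
  have hsucc : ∀ e ∈ S, ∃ e' ∈ S, tail e' = head e := by
    intro e he
    have hout : 0 < ∑ e' with tail e' = head e, f e' := by
      rw [← hf (head e)]
      exact (hpos e he).trans_le (single_le_sum (fun e' _ => hf0 e') (by simp))
    obtain ⟨e', he', hne⟩ := exists_ne_zero_of_sum_ne_zero hout.ne'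
    exact ⟨e', by simpa [S] using hne, (mem_filter.1 he').2⟩
  obtain ⟨C, hCS, hCne, hC⟩ :=
    exists_isCyclePacking_subset (by simpa [S, Finset.Nonempty] using Function.ne_iff.1 hzero) hsucc
  -- removing `C` with the least weight `f em` on it takes `em` out of the support
  obtain ⟨em, hem, hmin⟩ := C.exists_min_image f hCne
  set f' := f - f em • (C : Set E).indicator 1
  have hf'0 : 0 ≤ f' := fun e => by
    by_cases he : e ∈ C
    · simpa [f', he] using hmin e he
    · simpa [f', he] using hf0 e
  have hlt : #{e | f' e ≠ 0} < n := by
    refine hn ▸ card_lt_card ⟨fun e he => ?_, fun hsub => ?_⟩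
    · by_cases heC : e ∈ C
      · exact hCS heC
      · simpa [S, f', heC] using he
    · simpa [f', hem] using hsub (hCS hem)
  obtain ⟨c, hc0, hcC, hfc⟩ := ih _ hlt hf'0 (sub_mem hf (Submodule.smul_mem _ _ hC.1)) rfl
  refine ⟨c + Pi.single C (f em), add_nonneg hc0 ?_, fun D hD => ?_, ?_⟩
  · exact Pi.single_nonneg.2 (hf0 em)
  · by_cases hDC : D = C
    · exact hDC ▸ hC
    · exact hcC D (by simpa [Pi.single_apply, hDC] using hD)
  · have hsingle : ∑ D, (Pi.single C (f em) : Finset E → ℝ) D • (D : Set E).indicator 1 =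
        f em • (C : Set E).indicator (1 : E → ℝ) :=
      (Fintype.sum_eq_single C fun D hD => by simp [hD]).trans (by simp)
    simp only [Pi.add_apply, add_smul, sum_add_distrib, ← hfc, hsingle, f', sub_add_cancel]

theorem mem_circulations_sumElim_iff {χ : E ⊕ E → ℝ} :
    χ ∈ circulations (Sum.elim tail head) (Sum.elim head tail) ↔
      (fun e => χ (.inl e) - χ (.inr e)) ∈ circulations tail head := by
  have hsplit : ∀ (t h : E → W) w, ∑ x with Sum.elim h t x = w, χ x =
      ∑ e with h e = w, χ (.inl e) + ∑ e with t e = w, χ (.inr e) := by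
    intro t h w
    simp only [sum_filter, Fintype.sum_sum_type]
    rfl
  refine forall_congr' fun w => ?_
  rw [hsplit, hsplit, sum_sub_distrib, sum_sub_distrib]
  constructor <;> intro h <;> linarith

/-- `ψ` is a cycle of the underlying undirected graph traversed in the direction of `φ`: a cycle
packing of the doubled digraph carrying `φ⁺` forwards and `φ⁻` backwards. -/
theorem exists_conformal_cycle [DecidableEq E] {φ : E → ℝ} (hφ : φ ∈ circulations tail head)
    {s : Finset E} (hs : 0 < ∑ e ∈ s, φ e) :
    ∃ ψ : E → ℤ, (fun e => (ψ e : ℝ)) ∈ circulations tail head ∧ (∀ e, |ψ e| ≤ 1) ∧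
      0 < ∑ e ∈ s, ψ e ∧ ∃ ε > 0, ∀ e, ε * (ψ e : ℝ) ∈ Set.uIcc 0 (φ e) := by
  set d : E ⊕ E → ℝ := Sum.elim (fun e => (φ e)⁺) (fun e => (φ e)⁻)
  have hd : d ∈ circulations (Sum.elim tail head) (Sum.elim head tail) := by
    rw [mem_circulations_sumElim_iff]
    simpa [d, posPart_sub_negPart] using hφ
  have hd0 : 0 ≤ d := by rintro (e | e) <;> simp [d, posPart_nonneg, negPart_nonneg]
  obtain ⟨c, hc0, hcC, hdc⟩ := exists_isCyclePacking_decomposition hd0 hd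
  have hind0 : ∀ (C : Finset (E ⊕ E)) x, 0 ≤ (C : Set (E ⊕ E)).indicator (1 : E ⊕ E → ℝ) x :=
    fun _ => Set.indicator_nonneg fun _ _ => zero_le_one
  have hd_apply : ∀ x, d x = ∑ C, c C * (C : Set (E ⊕ E)).indicator 1 x := fun x => by
    simp [hdc, Finset.sum_apply]
  have hterm : ∀ C x, c C * (C : Set (E ⊕ E)).indicator 1 x ≤ d x := fun C x =>
    (hd_apply x).symm ▸ single_le_sum (f := fun D => c D * (D : Set (E ⊕ E)).indicator 1 x)
      (fun D _ => mul_nonneg (hc0 D) (hind0 D x)) (mem_univ C)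
  have hsum : ∑ e ∈ s, φ e = ∑ C, c C * ∑ e ∈ s, (signedIndicator C e : ℝ) := by
    have hφe : ∀ e, φ e = ∑ C, c C * signedIndicator C e := fun e => by
      rw [← posPart_sub_negPart (φ e)]
      simp only [signedIndicator_cast, mul_sub, sum_sub_distrib, ← hd_apply, d, Sum.elim_inl,
        Sum.elim_inr]
    simp only [hφe, mul_sum]
    exact sum_comm
  obtain ⟨C, -, hC⟩ := exists_lt_of_sum_lt (by simpa [hsum] using hs :
    ∑ C : Finset (E ⊕ E), (0 : ℝ) < ∑ C, c C * ∑ e ∈ s, (signedIndicator C e : ℝ))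
  have hcpos : 0 < c C := (hc0 C).lt_of_ne' fun h => by simp [h] at hC
  refine ⟨signedIndicator C, ?_, abs_signedIndicator_le C, ?_, c C, hcpos, fun e => ?_⟩
  · simpa only [signedIndicator_cast] using mem_circulations_sumElim_iff.1 (hcC C hcpos.ne').1
  · exact_mod_cast pos_of_mul_pos_right hC (hc0 C)
  · rw [signedIndicator_cast, mul_sub]
    exact sub_mem_uIcc_zero (mul_nonneg hcpos.le (hind0 C _)) (hterm C (.inl e))
      (mul_nonneg hcpos.le (hind0 C _)) (hterm C (.inr e))

end Circulation

namespace FlowNetwork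

variable {V E : Type} [Fintype V] [Fintype E] [DecidableEq V] [DecidableEq E]
  (N : FlowNetwork V E) {A A' B B' : Finset E} {f g h : E → ℝ}

def inEdges (v : V) : Finset E := (N.Ein ∪ N.Eint).filter (fun e => N.head e = v)

def outEdges (v : V) : Finset E := (N.Eout ∪ N.Eint).filter (fun e => N.tail e = v)

/-- The network closed up into a digraph on `Option V`: the extra vertex `none` is the tail of
every input edge and the head of every output edge (and both ends of an edge in no class). -/
def augTail (e : E) : Option V := if e ∈ N.Eout ∪ N.Eint then some (N.tail e) else none

def augHead (e : E) : Option V := if e ∈ N.Ein ∪ N.Eint then some (N.head e) else none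

theorem filter_augHead_eq_some (v : V) :
    ({e | N.augHead e = some v} : Finset E) = N.inEdges v := by
  ext e
  rw [mem_filter, inEdges, mem_filter, augHead]
  split_ifs with he <;> simp [he]

theorem filter_augTail_eq_some (v : V) :
    ({e | N.augTail e = some v} : Finset E) = N.outEdges v := by
  ext e
  rw [mem_filter, outEdges, mem_filter, augTail]
  split_ifs with he <;> simp [he]

theorem augTail_of_mem_Ein {e : E} (he : e ∈ N.Ein) : N.augTail e = none :=
  if_neg fun h => (mem_union.1 h).elim (disjoint_left.1 N.disj_in_out he)
    (disjoint_left.1 N.disj_in_int he)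

theorem feasible_iff :
    N.Feasible f ↔ 0 ≤ f ∧ f ≤ N.cap ∧ f ∈ circulations N.augTail N.augHead := by
  refine and_congr Iff.rfl (and_congr Iff.rfl ⟨fun hcons w => ?_, fun hcons v => ?_⟩)
  · cases w with
    | some v => rw [filter_augHead_eq_some, filter_augTail_eq_some]; exact hcons v
    | none =>
      -- both sides at `none` are the total flow minus the common value of the other vertices
      have hh := sum_fiberwise univ N.augHead f
      have ht := sum_fiberwise univ N.augTail f
      simp only [Fintype.sum_option, filter_augHead_eq_some, filter_augTail_eq_some] at hh ht
      have hv : ∑ v, ∑ e ∈ N.inEdges v, f e = ∑ v, ∑ e ∈ N.outEdges v, f e :=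
        sum_congr rfl fun v _ => hcons v
      linarith
  · have hv := hcons (some v)
    rw [filter_augHead_eq_some, filter_augTail_eq_some] at hv
    exact hv

theorem Feasible.sum_Ein_eq_sum_Eout {N : FlowNetwork V E} (hf : N.Feasible f) :
    ∑ e ∈ N.Ein, f e = ∑ e ∈ N.Eout, f e := by
  have hin := sum_fiberwise (N.Ein ∪ N.Eint) N.head f
  have hout := sum_fiberwise (N.Eout ∪ N.Eint) N.tail f
  rw [sum_union N.disj_in_int] at hin
  rw [sum_union N.disj_out_int] at hout
  have hv : ∑ v, ∑ e ∈ N.inEdges v, f e = ∑ v, ∑ e ∈ N.outEdges v, f e :=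
    sum_congr rfl fun v _ => hf.2.2 v
  simp only [inEdges, outEdges] at hv
  linarith

def IsFlowFromTo (A B : Finset E) (f : E → ℝ) : Prop :=
  N.Feasible f ∧ ∀ e ∈ (N.Ein \ A) ∪ (N.Eout \ B), f e = 0

theorem maxFromTo_eq_sSup :
    N.maxFromTo A B = sSup ((fun f => ∑ e ∈ A, f e) '' {f | N.IsFlowFromTo A B f}) := by
  simp only [maxFromTo, IsFlowFromTo, Set.image, Set.mem_ofPred_eq, and_assoc, eq_comm]

theorem isFlowFromTo_zero : N.IsFlowFromTo A B 0 :=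
  ⟨N.feasible_iff.2 ⟨le_rfl, N.cap_nonneg, zero_mem _⟩, fun _ _ => rfl⟩

variable {N}

theorem IsFlowFromTo.mono (hf : N.IsFlowFromTo A B f) (hA : A ⊆ A') (hB : B ⊆ B') :
    N.IsFlowFromTo A' B' f :=
  ⟨hf.1, fun e he => hf.2 e (union_subset_union (sdiff_subset_sdiff le_rfl hA)
    (sdiff_subset_sdiff le_rfl hB) he)⟩

theorem IsFlowFromTo.of_mem_uIcc (hf : N.IsFlowFromTo A B f) (hg : N.IsFlowFromTo A B g)
    (hh : h ∈ circulations N.augTail N.augHead) (hbetween : ∀ e, h e ∈ Set.uIcc (f e) (g e)) :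
    N.IsFlowFromTo A B h := by
  obtain ⟨hf0, hfcap, -⟩ := N.feasible_iff.1 hf.1
  obtain ⟨hg0, hgcap, -⟩ := N.feasible_iff.1 hg.1
  have hIcc : ∀ e, h e ∈ Set.Icc 0 (N.cap e) := fun e =>
    Set.uIcc_subset_Icc ⟨hf0 e, hfcap e⟩ ⟨hg0 e, hgcap e⟩ (hbetween e)
  refine ⟨N.feasible_iff.2 ⟨fun e => (hIcc e).1, fun e => (hIcc e).2, hh⟩, fun e he => ?_⟩
  simpa [hf.2 e he, hg.2 e he] using hbetween e

theorem IsFlowFromTo.add_of_mem_uIcc (hf : N.IsFlowFromTo A B f) (hg : N.IsFlowFromTo A B g)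
    (hh : h ∈ circulations N.augTail N.augHead) (hbetween : ∀ e, h e ∈ Set.uIcc 0 (g e - f e)) :
    N.IsFlowFromTo A B (f + h) := by
  refine hf.of_mem_uIcc hg (add_mem (N.feasible_iff.1 hf.1).2.2 hh) fun e => ?_
  rcases Set.mem_uIcc.1 (hbetween e) with ⟨h1, h2⟩ | ⟨h1, h2⟩
  · exact Set.mem_uIcc.2 (.inl ⟨by simpa using h1, by simp; linarith⟩)
  · exact Set.mem_uIcc.2 (.inr ⟨by simp; linarith, by simpa using h2⟩)

variable (N A B)

theorem convex_setOf_isFlowFromTo : Convex ℝ {f | N.IsFlowFromTo A B f} :=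
  fun _ hf _ hg _ _ ha hb hab =>
    IsFlowFromTo.of_mem_uIcc hf hg (add_mem (Submodule.smul_mem _ _ (N.feasible_iff.1 hf.1).2.2)
      (Submodule.smul_mem _ _ (N.feasible_iff.1 hg.1).2.2))
      fun _ => convex_uIcc _ _ Set.left_mem_uIcc Set.right_mem_uIcc ha hb hab

theorem isCompact_setOf_isFlowFromTo : IsCompact {f | N.IsFlowFromTo A B f} := by
  have hset : {f | N.IsFlowFromTo A B f} = Set.Icc 0 N.cap ∩
      ((circulations N.augTail N.augHead : Set (E → ℝ)) ∩
        ⋂ e ∈ (N.Ein \ A) ∪ (N.Eout \ B), {f | f e = 0}) := by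
    ext f
    simp [IsFlowFromTo, feasible_iff, and_assoc]
  rw [hset]
  exact isCompact_Icc.inter_right ((Submodule.closed_of_finiteDimensional _).inter
    (isClosed_biInter fun e _ => isClosed_eq (continuous_apply e) continuous_const))

theorem isCompact_image_sum : IsCompact ((fun f => ∑ e ∈ A, f e) '' {f | N.IsFlowFromTo A B f}) :=
  (N.isCompact_setOf_isFlowFromTo A B).image (by fun_prop)

variable {N A B}

theorem IsFlowFromTo.sum_le_maxFromTo (hf : N.IsFlowFromTo A B f) :
    ∑ e ∈ A, f e ≤ N.maxFromTo A B := by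
  rw [maxFromTo_eq_sSup]
  exact le_csSup (N.isCompact_image_sum A B).bddAbove ⟨f, hf, rfl⟩

theorem maxFromTo_le {y : ℝ} (h : ∀ f, N.IsFlowFromTo A B f → ∑ e ∈ A, f e ≤ y) :
    N.maxFromTo A B ≤ y := by
  rw [maxFromTo_eq_sSup]
  exact csSup_le ⟨_, 0, N.isFlowFromTo_zero, rfl⟩ (Set.forall_mem_image.2 h)

variable (N A B)

theorem exists_isFlowFromTo_sum_eq_maxFromTo :
    ∃ f, N.IsFlowFromTo A B f ∧ ∑ e ∈ A, f e = N.maxFromTo A B := by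
  rw [maxFromTo_eq_sSup]
  exact (N.isCompact_image_sum A B).sSup_mem ⟨_, 0, N.isFlowFromTo_zero, rfl⟩

variable {N A B}

theorem maxFromTo_mono (hA : A ⊆ A') (hB : B ⊆ B') : N.maxFromTo A B ≤ N.maxFromTo A' B' := by
  obtain ⟨f, hf, hfv⟩ := N.exists_isFlowFromTo_sum_eq_maxFromTo A B
  obtain ⟨hf0, -, -⟩ := N.feasible_iff.1 hf.1
  calc N.maxFromTo A B = ∑ e ∈ A, f e := hfv.symm
    _ ≤ ∑ e ∈ A', f e := sum_le_sum_of_subset_of_nonneg hA fun e _ _ => hf0 e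
    _ ≤ N.maxFromTo A' B' := (hf.mono hA hB).sum_le_maxFromTo

theorem IsFlowFromTo.sum_eq_sum (hf : N.IsFlowFromTo A B f) (hA : A ⊆ N.Ein) (hB : B ⊆ N.Eout) :
    ∑ e ∈ A, f e = ∑ e ∈ B, f e := by
  rw [sum_subset hA fun e he heA => hf.2 e (mem_union_left _ (mem_sdiff.2 ⟨he, heA⟩)),
    sum_subset hB fun e he heB => hf.2 e (mem_union_right _ (mem_sdiff.2 ⟨he, heB⟩))]
  exact hf.1.sum_Ein_eq_sum_Eout

variable (N) in
def reverse : FlowNetwork V E where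
  Ein := N.Eout
  Eout := N.Ein
  Eint := N.Eint
  disj_in_out := N.disj_in_out.symm
  disj_in_int := N.disj_out_int
  disj_out_int := N.disj_in_int
  tail := N.head
  head := N.tail
  no_self_loop e he := (N.no_self_loop e he).symm
  no_multi e he e' he' ht hh := N.no_multi e he e' he' hh ht
  cap := N.cap
  cap_nonneg := N.cap_nonneg

theorem isFlowFromTo_reverse_iff : N.reverse.IsFlowFromTo B A f ↔ N.IsFlowFromTo A B f := by
  simp only [IsFlowFromTo, Feasible, reverse, union_comm (N.Eout \ B)]
  exact and_congr (and_congr Iff.rfl (and_congr Iff.rfl (forall_congr' fun _ => eq_comm)))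
    Iff.rfl

theorem maxFromTo_reverse (hA : A ⊆ N.Ein) (hB : B ⊆ N.Eout) :
    N.reverse.maxFromTo B A = N.maxFromTo A B := by
  have hset : {f | N.reverse.IsFlowFromTo B A f} = {f | N.IsFlowFromTo A B f} :=
    Set.ext fun _ => isFlowFromTo_reverse_iff
  rw [maxFromTo_eq_sSup, maxFromTo_eq_sSup, hset]
  exact congrArg sSup (Set.image_congr fun f hf => (IsFlowFromTo.sum_eq_sum hf hA hB).symm)

variable {e1 : E}

theorem IsFlowFromTo.sum_le_maxFromTo_of_insert_input (hf : N.IsFlowFromTo (insert e1 A) B f)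
    (he1 : e1 ∈ N.Ein) (hA : A ⊆ N.Ein) (he1A : e1 ∉ A) : ∑ e ∈ A, f e ≤ N.maxFromTo A B := by
  obtain ⟨hf0, hfcap, hfc⟩ := N.feasible_iff.1 hf.1
  obtain ⟨c, hc0, hcC, hfc_eq⟩ := exists_isCyclePacking_decomposition hf0 hfc
  have hterm0 : ∀ C, 0 ≤ c C • (C : Set E).indicator (1 : E → ℝ) := fun C =>
    smul_nonneg (hc0 C) (Set.indicator_nonneg (fun _ _ => zero_le_one))
  set g := ∑ C with e1 ∉ C, c C • (C : Set E).indicator (1 : E → ℝ)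
  set r := ∑ C with e1 ∈ C, c C • (C : Set E).indicator (1 : E → ℝ)
  have hfgr : f = g + r := by rw [hfc_eq, add_comm, sum_filter_add_sum_filter_not]
  have hg0 : 0 ≤ g := sum_nonneg fun C _ => hterm0 C
  have hr0 : 0 ≤ r := sum_nonneg fun C _ => hterm0 C
  -- a cycle packing leaves the vertex `none` at most once, so one through `e1` avoids `A`
  have hrA : ∀ a ∈ A, r a = 0 := by
    intro a ha
    simp only [r, Finset.sum_apply]
    refine sum_eq_zero fun C hC => ?_
    by_cases hc : c C = 0
    · simp [hc]
    have haC : a ∉ C := fun haC => he1A <| (hcC C hc).2 haC (mem_filter.1 hC).2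
      ((N.augTail_of_mem_Ein (hA ha)).trans (N.augTail_of_mem_Ein he1).symm) ▸ ha
    simp [haC]
  have hge1 : g e1 = 0 := by
    simp only [g, Finset.sum_apply]
    exact sum_eq_zero fun C hC => by simp [(mem_filter.1 hC).2]
  have hgf : g ≤ f := hfgr ▸ le_add_of_nonneg_right hr0
  have hg : N.IsFlowFromTo A B g := by
    refine ⟨N.feasible_iff.2 ⟨hg0, hgf.trans hfcap, sum_mem fun C _ => ?_⟩, fun e he => ?_⟩
    · by_cases hc : c C = 0
      · simp [hc]
      · exact Submodule.smul_mem _ _ (hcC C hc).1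
    · by_cases he1e : e = e1
      · exact he1e ▸ hge1
      · have hfe : f e = 0 := hf.2 e (by simp_all)
        exact le_antisymm (hfe ▸ hgf e) (hg0 e)
  calc ∑ e ∈ A, f e = ∑ e ∈ A, g e := sum_congr rfl fun a ha => by simp [hfgr, hrA a ha]
    _ ≤ N.maxFromTo A B := hg.sum_le_maxFromTo

theorem exists_isFlowFromTo_insert_le_sum (he1A : e1 ∉ A) :
    ∃ f, N.IsFlowFromTo (insert e1 A) B f ∧
      N.maxFromTo (insert e1 A) B ≤ ∑ e ∈ insert e1 A, f e ∧ N.maxFromTo A B ≤ ∑ e ∈ A, f e := by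
  set K := {f | N.IsFlowFromTo (insert e1 A) B f ∧
    N.maxFromTo (insert e1 A) B ≤ ∑ e ∈ insert e1 A, f e}
  have hK : IsCompact K := (N.isCompact_setOf_isFlowFromTo _ B).inter_right
    (isClosed_le continuous_const (continuous_finsetSum _ fun e _ => continuous_apply e))
  obtain ⟨g1, hg1, hg1v⟩ := N.exists_isFlowFromTo_sum_eq_maxFromTo (insert e1 A) B
  obtain ⟨f, hfK, hfmax⟩ :=
    hK.exists_isMaxOn ⟨g1, hg1, hg1v.ge⟩ (f := fun f => ∑ e ∈ A, f e) (by fun_prop)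
  refine ⟨f, hfK.1, hfK.2, not_lt.1 fun hlt => ?_⟩
  obtain ⟨g0, hg0, hg0v⟩ := N.exists_isFlowFromTo_sum_eq_maxFromTo A B
  have hfc := (N.feasible_iff.1 hfK.1.1).2.2
  have hg0c := (N.feasible_iff.1 hg0.1).2.2
  obtain ⟨ψ, hψ, hψ1, hψA, ε, hε, hconf⟩ := exists_conformal_cycle (sub_mem hg0c hfc)
    (s := A) (by simpa [sum_sub_distrib, hg0v] using hlt)
  set f' := f + ε • fun e => (ψ e : ℝ)
  have hf' : N.IsFlowFromTo (insert e1 A) B f' :=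
    hfK.1.add_of_mem_uIcc (hg0.mono (subset_insert _ _) le_rfl) (Submodule.smul_mem _ _ hψ) hconf
  have hgainA : ∑ e ∈ A, f' e = ∑ e ∈ A, f e + ε * ∑ e ∈ A, (ψ e : ℝ) := by
    simp [f', sum_add_distrib, mul_sum]
  have hψA' : (1 : ℝ) ≤ ∑ e ∈ A, (ψ e : ℝ) := by exact_mod_cast hψA
  have hψe1 : (-1 : ℝ) ≤ ψ e1 := by exact_mod_cast (abs_le.1 (hψ1 e1)).1
  -- the cycle gains on `A` and loses at most one unit on `e1`, so it keeps the total value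
  have htotal : ∑ e ∈ insert e1 A, f e ≤ ∑ e ∈ insert e1 A, f' e := by
    rw [sum_insert he1A, sum_insert he1A, hgainA]
    simp only [f', Pi.add_apply, Pi.smul_apply, smul_eq_mul]
    nlinarith
  have hle : ∑ e ∈ A, f' e ≤ ∑ e ∈ A, f e := hfmax ⟨hf', hfK.2.trans htotal⟩
  nlinarith

theorem exists_isFlowFromTo_insert_input (he1 : e1 ∈ N.Ein) (hA : A ⊆ N.Ein) (he1A : e1 ∉ A)
    {s : ℝ} (hs0 : 0 ≤ s) (hs : s ≤ N.maxFromTo (insert e1 A) B - N.maxFromTo A B) :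
    ∃ f, N.IsFlowFromTo (insert e1 A) B f ∧ ∑ e ∈ A, f e = N.maxFromTo A B ∧ f e1 = s := by
  obtain ⟨g0, hg0, hg0v⟩ := N.exists_isFlowFromTo_sum_eq_maxFromTo A B
  have hg0' := hg0.mono (subset_insert e1 A) le_rfl
  have hg0e1 : g0 e1 = 0 := hg0.2 e1 (mem_union_left _ (mem_sdiff.2 ⟨he1, he1A⟩))
  rcases hs0.eq_or_lt with rfl | hs_pos
  · exact ⟨g0, hg0', hg0v, hg0e1⟩
  obtain ⟨f, hf, hftot, hfA⟩ := exists_isFlowFromTo_insert_le_sum (N := N) (B := B) he1A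
  have hfA' : ∑ e ∈ A, f e = N.maxFromTo A B :=
    le_antisymm (hf.sum_le_maxFromTo_of_insert_input he1 hA he1A) hfA
  have hfe1 : f e1 = N.maxFromTo (insert e1 A) B - N.maxFromTo A B := by
    have := hf.sum_le_maxFromTo
    rw [sum_insert he1A] at this hftot
    linarith
  set t := f e1
  have ht : 0 < t := hs_pos.trans_le (hfe1 ▸ hs)
  refine ⟨(1 - s / t) • g0 + (s / t) • f, N.convex_setOf_isFlowFromTo _ _ hg0' hf
    (sub_nonneg.2 ((div_le_one ht).2 (hfe1 ▸ hs))) (div_nonneg hs0 ht.le) (by ring), ?_, ?_⟩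
  · simp [sum_add_distrib, ← mul_sum, hg0v, hfA']
    ring
  · simp [hg0e1, t, ht.ne']

theorem IsFlowFromTo.sum_le_maxFromTo_of_insert_output {e2 : E}
    (hf : N.IsFlowFromTo A (insert e2 B) f) (he2 : e2 ∈ N.Eout) (hB : B ⊆ N.Eout) (he2B : e2 ∉ B)
    (hA : A ⊆ N.Ein) : ∑ e ∈ B, f e ≤ N.maxFromTo A B :=
  (isFlowFromTo_reverse_iff.2 hf |>.sum_le_maxFromTo_of_insert_input he2 hB he2B).trans_eq
    (maxFromTo_reverse hA hB)

theorem exists_isFlowFromTo_insert_output {e2 : E} (he2 : e2 ∈ N.Eout) (hB : B ⊆ N.Eout)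
    (he2B : e2 ∉ B) (hA : A ⊆ N.Ein) {s : ℝ} (hs0 : 0 ≤ s)
    (hs : s ≤ N.maxFromTo A (insert e2 B) - N.maxFromTo A B) :
    ∃ f, N.IsFlowFromTo A (insert e2 B) f ∧ ∑ e ∈ B, f e = N.maxFromTo A B ∧ f e2 = s := by
  rw [← maxFromTo_reverse hA hB, ← maxFromTo_reverse hA (insert_subset he2 hB)] at hs
  rw [← maxFromTo_reverse hA hB]
  obtain ⟨f, hf, hfB, hfe2⟩ :=
    N.reverse.exists_isFlowFromTo_insert_input (B := A) he2 hB he2B hs0 hs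
  exact ⟨f, isFlowFromTo_reverse_iff.1 hf, hfB, hfe2⟩

end FlowNetwork

namespace FlowNetwork

section SpliceRight

variable {Ei Ej : Type} [DecidableEq Ej] {e1 : Ei} {e2 : Ej}

variable (e1 e2) in
/-- The edges of `Nj` inside the spliced network: `e2` becomes the spliced edge `Sum.inl e1`. -/
def spliceRight (e : Ej) : Ei ⊕ Ej := if e = e2 then .inl e1 else .inr e

theorem spliceRight_eq_inl_iff {a : Ej} {e : Ei} :
    spliceRight e1 e2 a = .inl e ↔ a = e2 ∧ e1 = e := by
  unfold spliceRight
  split_ifs <;> simp [*]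

theorem spliceRight_eq_inr_iff {a e : Ej} : spliceRight e1 e2 a = .inr e ↔ a ≠ e2 ∧ a = e := by
  unfold spliceRight
  split_ifs <;> simp [*]

theorem spliceRight_injective : Function.Injective (spliceRight e1 e2) := by
  intro a b hab
  unfold spliceRight at hab
  split_ifs at hab <;> simp_all

end SpliceRight

section Splice

variable {Vi Ei Vj Ej : Type} [Fintype Vi] [Fintype Ei] [DecidableEq Vi] [DecidableEq Ei]
  [Fintype Vj] [Fintype Ej] [DecidableEq Vj] [DecidableEq Ej] {e1 : Ei} {e2 : Ej}

/-- `Nk` joins `Ni` and `Nj` by splicing the input edge `e1` of `Ni` and the output edge `e2`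
of `Nj` into the internal edge `Sum.inl e1`; the leftover `Sum.inr e2` is in no edge class. -/
structure IsSplice (Ni : FlowNetwork Vi Ei) (Nj : FlowNetwork Vj Ej) (e1 : Ei) (e2 : Ej)
    (Nk : FlowNetwork (Vi ⊕ Vj) (Ei ⊕ Ej)) : Prop where
  mem_Ein : e1 ∈ Ni.Ein
  mem_Eout : e2 ∈ Nj.Eout
  cap_eq : Ni.cap e1 = Nj.cap e2
  Ein_eq : Nk.Ein = (Ni.Ein.erase e1).image Sum.inl ∪ Nj.Ein.image Sum.inr
  Eout_eq : Nk.Eout = Ni.Eout.image Sum.inl ∪ (Nj.Eout.erase e2).image Sum.inr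
  Eint_eq : Nk.Eint = insert (Sum.inl e1) (Ni.Eint.image Sum.inl ∪ Nj.Eint.image Sum.inr)
  head_inl : ∀ e, Nk.head (.inl e) = .inl (Ni.head e)
  tail_inl : ∀ e, e ≠ e1 → Nk.tail (.inl e) = .inl (Ni.tail e)
  tail_inl_self : Nk.tail (.inl e1) = .inr (Nj.tail e2)
  head_inr : ∀ e, Nk.head (.inr e) = .inr (Nj.head e)
  tail_inr : ∀ e, Nk.tail (.inr e) = .inr (Nj.tail e)
  cap_inl : ∀ e, Nk.cap (.inl e) = Ni.cap e
  cap_inr : ∀ e, Nk.cap (.inr e) = Nj.cap e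

namespace IsSplice

variable {Ni : FlowNetwork Vi Ei} {Nj : FlowNetwork Vj Ej}
  {Nk : FlowNetwork (Vi ⊕ Vj) (Ei ⊕ Ej)}

theorem e1_notMem (h : IsSplice Ni Nj e1 e2 Nk) : e1 ∉ Ni.Eout ∧ e1 ∉ Ni.Eint :=
  ⟨disjoint_left.1 Ni.disj_in_out h.mem_Ein, disjoint_left.1 Ni.disj_in_int h.mem_Ein⟩

theorem e2_notMem (h : IsSplice Ni Nj e1 e2 Nk) : e2 ∉ Nj.Ein ∧ e2 ∉ Nj.Eint :=
  ⟨disjoint_right.1 Nj.disj_in_out h.mem_Eout, disjoint_left.1 Nj.disj_out_int h.mem_Eout⟩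

theorem tail_inl_eq (h : IsSplice Ni Nj e1 e2 Nk) (e : Ei) :
    Nk.tail (.inl e) = if e = e1 then .inr (Nj.tail e2) else .inl (Ni.tail e) := by
  split_ifs with he
  · exact he ▸ h.tail_inl_self
  · exact h.tail_inl e he

theorem inEdges_inl (h : IsSplice Ni Nj e1 e2 Nk) (w : Vi) :
    Nk.inEdges (.inl w) = (Ni.inEdges w).image .inl := by
  have := h.mem_Ein
  ext (e | e) <;> simp [inEdges, h.Ein_eq, h.Eint_eq, h.head_inl, h.head_inr]
  grind

theorem outEdges_inl (h : IsSplice Ni Nj e1 e2 Nk) (w : Vi) :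
    Nk.outEdges (.inl w) = (Ni.outEdges w).image .inl := by
  have := h.e1_notMem
  ext (e | e) <;> simp [outEdges, h.Eout_eq, h.Eint_eq, h.tail_inr, h.tail_inl_eq]
  grind

theorem inEdges_inr (h : IsSplice Ni Nj e1 e2 Nk) (w : Vj) :
    Nk.inEdges (.inr w) = (Nj.inEdges w).image (spliceRight e1 e2) := by
  have := h.e2_notMem
  ext (e | e) <;> simp [inEdges, h.Ein_eq, h.Eint_eq, h.head_inl, h.head_inr,
    spliceRight_eq_inl_iff, spliceRight_eq_inr_iff] <;> grind

theorem outEdges_inr (h : IsSplice Ni Nj e1 e2 Nk) (w : Vj) :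
    Nk.outEdges (.inr w) = (Nj.outEdges w).image (spliceRight e1 e2) := by
  have := h.mem_Eout
  have := h.e2_notMem
  ext (e | e) <;> simp [outEdges, h.Eout_eq, h.Eint_eq, h.tail_inr, h.tail_inl_eq,
    spliceRight_eq_inl_iff, spliceRight_eq_inr_iff] <;> grind

theorem conserves_iff (h : IsSplice Ni Nj e1 e2 Nk) (F : Ei ⊕ Ej → ℝ) :
    (∀ v, ∑ x ∈ Nk.inEdges v, F x = ∑ x ∈ Nk.outEdges v, F x) ↔
      (∀ w, ∑ e ∈ Ni.inEdges w, F (.inl e) = ∑ e ∈ Ni.outEdges w, F (.inl e)) ∧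
      ∀ w, ∑ e ∈ Nj.inEdges w, F (spliceRight e1 e2 e) =
        ∑ e ∈ Nj.outEdges w, F (spliceRight e1 e2 e) := by
  simp only [Sum.forall, h.inEdges_inl, h.outEdges_inl, h.inEdges_inr, h.outEdges_inr,
    sum_image Sum.inl_injective.injOn, sum_image spliceRight_injective.injOn]

variable {A1 B1 : Finset Ei} {A2 B2 : Finset Ej}

theorem isFlowFromTo_restrict (h : IsSplice Ni Nj e1 e2 Nk) {F : Ei ⊕ Ej → ℝ}
    (hF : Nk.IsFlowFromTo (A1.image .inl ∪ A2.image .inr) (B1.image .inl ∪ B2.image .inr) F) :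
    Ni.IsFlowFromTo (insert e1 A1) B1 (F ∘ .inl) ∧
      Nj.IsFlowFromTo A2 (insert e2 B2) (F ∘ spliceRight e1 e2) := by
  obtain ⟨⟨hF0, hFcap, hFcons⟩, hFsupp⟩ := hF
  obtain ⟨hconsi, hconsj⟩ := (h.conserves_iff F).1 hFcons
  have := h.e2_notMem
  refine ⟨⟨⟨fun e => hF0 _, fun e => (hFcap _).trans_eq (h.cap_inl e), hconsi⟩,
    fun e he => hFsupp _ ?_⟩, ⟨⟨fun e => hF0 _, fun e => ?_, hconsj⟩, fun e he => ?_⟩⟩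
  · simp [h.Ein_eq, h.Eout_eq] at he ⊢
    tauto
  · by_cases he : e = e2
    · simpa [spliceRight, he, h.cap_inl, h.cap_eq] using hFcap (.inl e1)
    · simpa [spliceRight, he, h.cap_inr] using hFcap (.inr e)
  · have hne : e ≠ e2 := by rintro rfl; simp_all
    simp only [Function.comp_apply, spliceRight, if_neg hne]
    exact hFsupp _ (by simp [h.Ein_eq, h.Eout_eq] at he ⊢; tauto)

theorem isFlowFromTo_glue (h : IsSplice Ni Nj e1 e2 Nk) {fi : Ei → ℝ} {fj : Ej → ℝ}
    (hfi : Ni.IsFlowFromTo (insert e1 A1) B1 fi) (hfj : Nj.IsFlowFromTo A2 (insert e2 B2) fj)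
    (he : fi e1 = fj e2) :
    Nk.IsFlowFromTo (A1.image .inl ∪ A2.image .inr) (B1.image .inl ∪ B2.image .inr)
      (Sum.elim fi (Function.update fj e2 0)) := by
  have hFj : ∀ e, Sum.elim fi (Function.update fj e2 0) (spliceRight e1 e2 e) = fj e := fun e => by
    by_cases he2 : e = e2 <;> simp [spliceRight, he2, he]
  have hconsj := hfj.1.2.2
  simp only [← hFj] at hconsj
  have := h.e2_notMem
  refine ⟨⟨?_, ?_, (h.conserves_iff _).2 ⟨hfi.1.2.2, hconsj⟩⟩, ?_⟩
  · rintro (e | e)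
    · exact hfi.1.1 e
    · by_cases he2 : e = e2 <;> simp [he2, hfj.1.1 e]
  · rintro (e | e)
    · exact (hfi.1.2.1 e).trans_eq (h.cap_inl e).symm
    · by_cases he2 : e = e2
      · simp [he2, Nk.cap_nonneg]
      · simpa [he2, h.cap_inr] using hfj.1.2.1 e
  · rintro (e | e) hx
    · exact hfi.2 e (by simp [h.Ein_eq, h.Eout_eq] at hx ⊢; tauto)
    · by_cases he2 : e = e2
      · simp [he2]
      · simpa [he2] using hfj.2 e (by simp [h.Ein_eq, h.Eout_eq] at hx ⊢; tauto)

theorem maxFromTo_le_add_min (h : IsSplice Ni Nj e1 e2 Nk) (hA1 : A1 ⊆ Ni.Ein) (he1A1 : e1 ∉ A1)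
    (hA2 : A2 ⊆ Nj.Ein) (hB2 : B2 ⊆ Nj.Eout) (he2B2 : e2 ∉ B2) :
    Nk.maxFromTo (A1.image .inl ∪ A2.image .inr) (B1.image .inl ∪ B2.image .inr) ≤
      Ni.maxFromTo A1 B1 + Nj.maxFromTo A2 B2 +
        min (Ni.maxFromTo (insert e1 A1) B1 - Ni.maxFromTo A1 B1)
          (Nj.maxFromTo A2 (insert e2 B2) - Nj.maxFromTo A2 B2) := by
  refine maxFromTo_le fun F hF => ?_
  obtain ⟨hfi, hfj⟩ := h.isFlowFromTo_restrict hF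
  have hval : ∑ x ∈ A1.image .inl ∪ A2.image .inr, F x =
      ∑ e ∈ A1, (F ∘ .inl) e + ∑ e ∈ A2, (F ∘ spliceRight e1 e2) e := by
    rw [sum_image_inl_union_image_inr]
    refine congrArg _ (sum_congr rfl fun e he => ?_)
    have hne : e ≠ e2 := fun hee => h.e2_notMem.1 (hee ▸ hA2 he)
    simp [spliceRight, hne]
  have hi1 := hfi.sum_le_maxFromTo_of_insert_input h.mem_Ein hA1 he1A1
  have hi2 := hfi.sum_le_maxFromTo
  have hj1 := hfj.sum_le_maxFromTo
  have hj2 := hfj.sum_le_maxFromTo_of_insert_output h.mem_Eout hB2 he2B2 hA2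
  have hj3 := hfj.sum_eq_sum hA2 (insert_subset h.mem_Eout hB2)
  rw [sum_insert he1A1] at hi2
  rw [sum_insert he2B2] at hj3
  have he : (F ∘ .inl) e1 = (F ∘ spliceRight e1 e2) e2 := by simp [spliceRight]
  rw [hval, add_min]
  exact le_min (by linarith) (by linarith)

theorem add_min_le_maxFromTo (h : IsSplice Ni Nj e1 e2 Nk) (hA1 : A1 ⊆ Ni.Ein) (he1A1 : e1 ∉ A1)
    (hA2 : A2 ⊆ Nj.Ein) (hB2 : B2 ⊆ Nj.Eout) (he2B2 : e2 ∉ B2) :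
    Ni.maxFromTo A1 B1 + Nj.maxFromTo A2 B2 +
        min (Ni.maxFromTo (insert e1 A1) B1 - Ni.maxFromTo A1 B1)
          (Nj.maxFromTo A2 (insert e2 B2) - Nj.maxFromTo A2 B2) ≤
      Nk.maxFromTo (A1.image .inl ∪ A2.image .inr) (B1.image .inl ∪ B2.image .inr) := by
  set m := min (Ni.maxFromTo (insert e1 A1) B1 - Ni.maxFromTo A1 B1)
    (Nj.maxFromTo A2 (insert e2 B2) - Nj.maxFromTo A2 B2)
  have hm0 : 0 ≤ m := le_min (sub_nonneg.2 (maxFromTo_mono (subset_insert _ _) le_rfl))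
    (sub_nonneg.2 (maxFromTo_mono le_rfl (subset_insert _ _)))
  obtain ⟨fi, hfi, hfiA, hfie⟩ :=
    exists_isFlowFromTo_insert_input h.mem_Ein hA1 he1A1 hm0 (min_le_left _ _)
  obtain ⟨fj, hfj, hfjB, hfje⟩ :=
    exists_isFlowFromTo_insert_output h.mem_Eout hB2 he2B2 hA2 hm0 (min_le_right _ _)
  have hfjA := hfj.sum_eq_sum hA2 (insert_subset h.mem_Eout hB2)
  rw [sum_insert he2B2, hfjB, hfje] at hfjA
  refine le_of_eq_of_le ?_ (h.isFlowFromTo_glue hfi hfj (hfie.trans hfje.symm)).sum_le_maxFromTo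
  rw [sum_image_inl_union_image_inr]
  have hA2' : ∀ e ∈ A2, e ≠ e2 := fun e he hee => h.e2_notMem.1 (hee ▸ hA2 he)
  simp only [Sum.elim_inl, Sum.elim_inr]
  rw [sum_congr rfl fun e he => Function.update_of_ne (hA2' e he) _ _, hfiA, hfjA]
  ring

end IsSplice

end Splice

theorem stmt12_general
    {Vi Ei Vj Ej : Type} [Fintype Vi] [Fintype Ei] [DecidableEq Vi] [DecidableEq Ei]
    [Fintype Vj] [Fintype Ej] [DecidableEq Vj] [DecidableEq Ej]
    (Ni : FlowNetwork Vi Ei) (Nj : FlowNetwork Vj Ej)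
    (e1 : Ei) (e2 : Ej) (he1 : e1 ∈ Ni.Ein) (he2 : e2 ∈ Nj.Eout)
    (hcap12 : Ni.cap e1 = Nj.cap e2)
    (Nk : FlowNetwork (Vi ⊕ Vj) (Ei ⊕ Ej))
    (hEin : Nk.Ein = (Ni.Ein.erase e1).image Sum.inl ∪ Nj.Ein.image Sum.inr)
    (hEout : Nk.Eout = Ni.Eout.image Sum.inl ∪ (Nj.Eout.erase e2).image Sum.inr)
    (hEint : Nk.Eint =
      insert (Sum.inl e1) (Ni.Eint.image Sum.inl ∪ Nj.Eint.image Sum.inr))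
    (hheadl : ∀ e : Ei, Nk.head (Sum.inl e) = Sum.inl (Ni.head e))
    (htaill : ∀ e : Ei, e ≠ e1 → Nk.tail (Sum.inl e) = Sum.inl (Ni.tail e))
    (hsplice : Nk.tail (Sum.inl e1) = Sum.inr (Nj.tail e2))
    (hheadr : ∀ e : Ej, Nk.head (Sum.inr e) = Sum.inr (Nj.head e))
    (htailr : ∀ e : Ej, Nk.tail (Sum.inr e) = Sum.inr (Nj.tail e))
    (hcapl : ∀ e : Ei, Nk.cap (Sum.inl e) = Ni.cap e)
    (hcapr : ∀ e : Ej, Nk.cap (Sum.inr e) = Nj.cap e)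
    (A1 B1 : Finset Ei) (A2 B2 : Finset Ej)
    (hA1 : A1 ⊆ Ni.Ein.erase e1) (hA2 : A2 ⊆ Nj.Ein)
    (hB2 : B2 ⊆ Nj.Eout.erase e2) :
    Nk.maxFromTo (A1.image Sum.inl ∪ A2.image Sum.inr)
                 (B1.image Sum.inl ∪ B2.image Sum.inr) =
      Ni.maxFromTo A1 B1 + Nj.maxFromTo A2 B2 +
        min (Ni.maxFromTo (insert e1 A1) B1 - Ni.maxFromTo A1 B1)
            (Nj.maxFromTo A2 (insert e2 B2) - Nj.maxFromTo A2 B2) := by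
  have h : IsSplice Ni Nj e1 e2 Nk :=
    ⟨he1, he2, hcap12, hEin, hEout, hEint, hheadl, htaill, hsplice, hheadr, htailr, hcapl, hcapr⟩
  have hA1' : A1 ⊆ Ni.Ein := hA1.trans (erase_subset _ _)
  have he1A1 : e1 ∉ A1 := fun he => notMem_erase e1 _ (hA1 he)
  have hB2' : B2 ⊆ Nj.Eout := hB2.trans (erase_subset _ _)
  have he2B2 : e2 ∉ B2 := fun he => notMem_erase e2 _ (hB2 he)
  exact le_antisymm (h.maxFromTo_le_add_min hA1' he1A1 hA2 hB2' he2B2)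
    (h.add_min_le_maxFromTo hA1' he1A1 hA2 hB2' he2B2)

/-- splicing across two disjoint networks, Case 1 of the induction:
`Nk` is obtained from `Ni` and `Nj` (on disjoint vertex/edge universes, modelled by
sum types) by splicing the input edge `e1` of `Ni` and the output edge `e2` of `Nj`
into a single internal edge `e` (encoded as `Sum.inl e1`; the leftover half
`Sum.inr e2` is junk, belonging to none of the three edge classes of `Nk`).
Then `maxFromTo` of the spliced network is given by the stated formula. -/
theorem stmt12
    {Vi Ei Vj Ej : Type} [Fintype Vi] [Fintype Ei] [DecidableEq Vi] [DecidableEq Ei]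
    [Fintype Vj] [Fintype Ej] [DecidableEq Vj] [DecidableEq Ej]
    (Ni : FlowNetwork Vi Ei) (Nj : FlowNetwork Vj Ej)
    (hcoveri : Ni.Ein ∪ Ni.Eout ∪ Ni.Eint = Finset.univ)
    (hcoverj : Nj.Ein ∪ Nj.Eout ∪ Nj.Eint = Finset.univ)
    (e1 : Ei) (e2 : Ej) (he1 : e1 ∈ Ni.Ein) (he2 : e2 ∈ Nj.Eout)
    (hcap12 : Ni.cap e1 = Nj.cap e2)
    (Nk : FlowNetwork (Vi ⊕ Vj) (Ei ⊕ Ej))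
    (hEin : Nk.Ein = (Ni.Ein.erase e1).image Sum.inl ∪ Nj.Ein.image Sum.inr)
    (hEout : Nk.Eout = Ni.Eout.image Sum.inl ∪ (Nj.Eout.erase e2).image Sum.inr)
    (hEint : Nk.Eint =
      insert (Sum.inl e1) (Ni.Eint.image Sum.inl ∪ Nj.Eint.image Sum.inr))
    (hheadl : ∀ e : Ei, Nk.head (Sum.inl e) = Sum.inl (Ni.head e))
    (htaill : ∀ e : Ei, e ≠ e1 → Nk.tail (Sum.inl e) = Sum.inl (Ni.tail e))
    (hsplice : Nk.tail (Sum.inl e1) = Sum.inr (Nj.tail e2))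
    (hheadr : ∀ e : Ej, Nk.head (Sum.inr e) = Sum.inr (Nj.head e))
    (htailr : ∀ e : Ej, Nk.tail (Sum.inr e) = Sum.inr (Nj.tail e))
    (hcapl : ∀ e : Ei, Nk.cap (Sum.inl e) = Ni.cap e)
    (hcapr : ∀ e : Ej, Nk.cap (Sum.inr e) = Nj.cap e)
    (A1 B1 : Finset Ei) (A2 B2 : Finset Ej)
    (hA1 : A1 ⊆ Ni.Ein.erase e1) (hA2 : A2 ⊆ Nj.Ein)
    (hB1 : B1 ⊆ Ni.Eout) (hB2 : B2 ⊆ Nj.Eout.erase e2) :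
    Nk.maxFromTo (A1.image Sum.inl ∪ A2.image Sum.inr)
                 (B1.image Sum.inl ∪ B2.image Sum.inr) =
      Ni.maxFromTo A1 B1 + Nj.maxFromTo A2 B2 +
        min (Ni.maxFromTo (insert e1 A1) B1 - Ni.maxFromTo A1 B1)
            (Nj.maxFromTo A2 (insert e2 B2) - Nj.maxFromTo A2 B2) :=
  stmt12_general Ni Nj e1 e2 he1 he2 hcap12 Nk hEin hEout hEint hheadl htaill hsplice hheadr htailr
    hcapl hcapr A1 B1 A2 B2 hA1 hA2 hB2

end FlowNetwork
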